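/- Let v be a vertex of T and let S be the subtree of T consisting of v and all its descendants, written as the disjoint union of its maximal memory intervals. Then for each of these maximal memory intervals, its first vertex in vEB_ε(T) lies on the leftmost branch of S (the path from v obtained by always descending to the leftmost child), and its last vertex in vEB_ε(T) lies on the rightmost branch of S (the path from v obtained by always descending to the rightmost child). -/

import Mathlib

namespace VEB

inductive OTree : Type where
  | node : List OTree → OTree

def OTree.children : OTree → List OTree
  | .node cs => cs

mutual
  def height : OTree → ℕ
    | .node cs => 1 + heightList cs
  def heightList : List OTree → ℕ
    | [] => 0
    | c :: cs => max (height c) (heightList cs)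
end

def subtreeAt? : OTree → List ℕ → Option OTree
  | t, [] => some t
  | t, i :: p =>
    match t.children[i]? with
    | some c => subtreeAt? c p
    | none => none

/-- `p` is (the path of) a vertex of `t`. -/
def IsVertex (t : OTree) (p : List ℕ) : Prop := (subtreeAt? t p).isSome

/-- `p` is a leaf of `t`. -/
def IsLeaf (t : OTree) (p : List ℕ) : Prop := subtreeAt? t p = some (.node [])

/-- All leaves of `t` are at the same depth (the bottom level). -/
def Uniform (t : OTree) : Prop := ∀ p, IsLeaf t p → p.length + 1 = height t

/-- The top `m+1` levels of `t` (the truncation of height `m+1`). -/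
def trunc : ℕ → OTree → OTree
  | 0, _ => .node []
  | m+1, t => .node (t.children.map (trunc m))

/-- Paths of the vertices at depth `m`, in left-to-right order. -/
def levelPaths : ℕ → OTree → List (List ℕ)
  | 0, _ => [[]]
  | m+1, t => ((t.children.zipIdx.map Prod.swap).map fun ic => (levelPaths m ic.2).map (ic.1 :: ·)).flatten

/-- The level at which a tree of height `h` is cut: `max ⌊ε h⌋ 1`. -/
noncomputable def cutLevel (ε : ℝ) (h : ℕ) : ℕ := max ⌊ε * (h : ℝ)⌋₊ 1

/-- The van Emde Boas order of the vertex paths of `t` (with recursion fuel). -/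
noncomputable def vEBAux (ε : ℝ) : ℕ → OTree → List (List ℕ)
  | 0, _ => []
  | fuel+1, t =>
    if height t ≤ 1 then [[]]
    else
      let m := cutLevel ε (height t)
      vEBAux ε fuel (trunc (m - 1) t) ++
        ((levelPaths m t).map fun q =>
          match subtreeAt? t q with
          | some s => (vEBAux ε fuel s).map (q ++ ·)
          | none => []).flatten

/-- The van Emde Boas order `vEB_ε(t)` of the vertex paths of `t`. -/
noncomputable def vEB (ε : ℝ) (t : OTree) : List (List ℕ) := vEBAux ε (height t) t

/-- Position (index) of vertex `p` in the van Emde Boas order. -/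
noncomputable def pos (ε : ℝ) (t : OTree) (p : List ℕ) : ℕ := (vEB ε t).idxOf p

/-- `A` is a set of vertices occupying consecutive positions in `vEB_ε(t)`. -/
def MemInterval (ε : ℝ) (t : OTree) (A : Set (List ℕ)) : Prop :=
  ∃ i n, A = {p | p ∈ ((vEB ε t).drop i).take n}

/-- The vertices of the decomposition `D` of `t`: pairs `(p, k)` of the root path
and the height of a decomposition subtree (with recursion fuel). -/
noncomputable def decompAux (ε : ℝ) : ℕ → OTree → List (List ℕ × ℕ)
  | 0, _ => []
  | fuel+1, t =>
    if height t ≤ 1 then [([], 1)]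
    else
      let m := cutLevel ε (height t)
      ([], height t) ::
        (decompAux ε fuel (trunc (m - 1) t) ++
          ((levelPaths m t).map fun q =>
            match subtreeAt? t q with
            | some s => (decompAux ε fuel s).map fun r => (q ++ r.1, r.2)
            | none => []).flatten)

/-- The vertices of the decomposition `D` of `t`. -/
noncomputable def decompVerts (ε : ℝ) (t : OTree) : List (List ℕ × ℕ) :=
  decompAux ε (height t) t

/-- The children in the decomposition tree `D` of the decomposition vertex `(p, k)`:
the top tree followed by the bottom trees in left-to-right order. -/
noncomputable def dChildren (ε : ℝ) (t : OTree) (p : List ℕ) (k : ℕ) : List (List ℕ × ℕ) :=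
  if k ≤ 1 then []
  else
    match subtreeAt? t p with
    | some s =>
      (p, cutLevel ε k) ::
        (levelPaths (cutLevel ε k) s).map fun q => (p ++ q, k - cutLevel ε k)
    | none => []

/-- The decomposition subtree `(p, k)` contains the vertex `w` of `t`;
equivalently, the leaf `{w}` of `D` lies in the subtree of `D` rooted at `(p, k)`. -/
def DContains (p : List ℕ) (k : ℕ) (w : List ℕ) : Prop :=
  p <+: w ∧ w.length < p.length + k

/-- Vertex `v` is to the left of the branch with leaf `ℓ`. -/
def LeftOfBranch (v ℓ : List ℕ) : Prop := List.Lex (· < ·) v (ℓ.take v.length)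

/-- Vertex `v` is to the right of the branch with leaf `ℓ`. -/
def RightOfBranch (v ℓ : List ℕ) : Prop := List.Lex (· < ·) (ℓ.take v.length) v

/-- Every internal vertex of `t` has at least `a` children. -/
def MinArity (t : OTree) (a : ℕ) : Prop :=
  ∀ p s, subtreeAt? t p = some s → s.children ≠ [] → a ≤ s.children.length

/-- Every internal vertex of `t` has at most `b` children. -/
def MaxArity (t : OTree) (b : ℕ) : Prop :=
  ∀ p s, subtreeAt? t p = some s → s.children.length ≤ b

/-- `w` lies on the leftmost branch descending from `v` (always taking the leftmost child). -/
def OnLeftmostBranch (v w : List ℕ) : Prop :=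
  v <+: w ∧ ∀ n (hn : n < w.length), v.length ≤ n → w.get ⟨n, hn⟩ = 0

/-- `w` lies on the rightmost branch descending from `v` (always taking the rightmost child). -/
def OnRightmostBranch (t : OTree) (v w : List ℕ) : Prop :=
  v <+: w ∧ ∀ n (hn : n < w.length), v.length ≤ n →
    ∀ s, subtreeAt? t (w.take n) = some s → w.get ⟨n, hn⟩ + 1 = s.children.length


/-!
The order `vEB ε t` is the order of the top tree followed by the orders of the bottom trees, and
the bottom trees hang, from left to right, at the consecutive vertices of the cut level. By
induction along this decomposition, whenever `b` directly follows `a` in `vEB ε t` and `b`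
descends from a vertex `v` while `a` does not, `b` lies on the leftmost branch of `v`; and
symmetrically, if `a` descends from `v` while `b` does not, `a` lies on the rightmost branch of
`v`. The first vertex of `vEB ε t` is the root and the last one lies on the rightmost branch of the
root. A maximal memory interval inside the subtree of `v` is preceded (unless it starts at the
root) and followed (unless it ends the order) by vertices outside that subtree, which gives the
claim.
-/

section Segments

variable {α : Type*} [BEq α] [LawfulBEq α] {L : List α} {P : α → Prop} {i n : ℕ}

theorem mem_drop_take_iff_of_nodup (hL : L.Nodup) {x : α} :
    x ∈ (L.drop i).take n ↔ x ∈ L ∧ i ≤ L.idxOf x ∧ L.idxOf x < i + n := by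
  constructor
  · intro hx
    obtain ⟨j, hj, rfl⟩ := List.mem_take_iff_getElem.1 hx
    simp only [List.length_drop, List.getElem_drop] at hj ⊢
    rw [hL.idxOf_getElem]
    exact ⟨List.getElem_mem _, by omega, by omega⟩
  · rintro ⟨hx, hi, hn⟩
    have hlt := List.idxOf_lt_length_of_mem hx
    refine List.mem_take_iff_getElem.2 ⟨L.idxOf x - i, by simp; omega, ?_⟩
    simp only [List.getElem_drop, Nat.add_sub_cancel' hi, List.getElem_idxOf]

variable {w : α} (hL : L.Nodup) (hP : {x | x ∈ (L.drop i).take n} ⊆ {x | P x})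
  (hmax : ∀ J : Set α, (∃ j m, J = {x | x ∈ (L.drop j).take m}) →
    {x | x ∈ (L.drop i).take n} ⊆ J → J ⊆ {x | P x} → J = {x | x ∈ (L.drop i).take n})
include hL hP hmax

/-- A `P`-element next to a maximal `P`-segment lies in it, since it would extend it. -/
theorem getElem_mem_of_maximal {e : ℕ} (he : e < L.length) (hPe : P L[e]) (h₁ : i ≤ e + 1)
    (h₂ : e ≤ i + n) : L[e] ∈ (L.drop i).take n := by
  have hidx := hL.idxOf_getElem e he
  by_cases hin : i ≤ e ∧ e < i + n
  · exact (mem_drop_take_iff_of_nodup hL).2 ⟨List.getElem_mem _, by rwa [hidx]⟩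
  have hJ := hmax {x | x ∈ (L.drop (min e i)).take (n + 1)} ⟨_, _, rfl⟩ (fun x hx => ?_)
    (fun x hx => ?_)
  · refine (Set.ext_iff.1 hJ L[e]).1 ((mem_drop_take_iff_of_nodup hL).2 ?_)
    exact ⟨List.getElem_mem _, by omega, by omega⟩
  all_goals simp only [Set.mem_ofPred_eq, mem_drop_take_iff_of_nodup hL] at hx ⊢
  · exact ⟨hx.1, by omega, by omega⟩
  · by_cases hxe : L.idxOf x = e
    · rw [(List.idxOf_inj hx.1).1 (hxe.trans hidx.symm)]
      exact hPe
    · exact hP ((mem_drop_take_iff_of_nodup hL).2 ⟨hx.1, by omega, by omega⟩)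

theorem eq_head_or_not_pred_of_maximal (hw : w ∈ (L.drop i).take n)
    (hfirst : ∀ u ∈ (L.drop i).take n, L.idxOf w ≤ L.idxOf u) :
    L.head? = some w ∨ ∃ k, ∃ hk : k + 1 < L.length, L[k + 1] = w ∧ ¬ P L[k] := by
  obtain ⟨hwL, hiw, hwn⟩ := (mem_drop_take_iff_of_nodup hL).1 hw
  have hlt := List.idxOf_lt_length_of_mem hwL
  have hLw := List.getElem_idxOf hlt
  generalize L.idxOf w = k at *
  subst hLw
  rcases k with _ | k
  · exact Or.inl (List.head?_eq_getElem?.trans (List.getElem?_eq_getElem hlt))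
  refine Or.inr ⟨k, hlt, rfl, fun hPk => ?_⟩
  have := hfirst _ (getElem_mem_of_maximal hL hP hmax _ hPk (by omega) (by omega))
  rw [hL.idxOf_getElem] at this
  omega

theorem eq_getLast_or_not_succ_of_maximal (hw : w ∈ (L.drop i).take n)
    (hlast : ∀ u ∈ (L.drop i).take n, L.idxOf u ≤ L.idxOf w) :
    L.getLast? = some w ∨ ∃ k, ∃ hk : k + 1 < L.length, L[k] = w ∧ ¬ P L[k + 1] := by
  obtain ⟨hwL, hiw, hwn⟩ := (mem_drop_take_iff_of_nodup hL).1 hw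
  have hlt := List.idxOf_lt_length_of_mem hwL
  have hLw := List.getElem_idxOf hlt
  generalize L.idxOf w = k at *
  subst hLw
  by_cases hk : k + 1 < L.length
  · refine Or.inr ⟨k, hk, rfl, fun hPk => ?_⟩
    have := hlast _ (getElem_mem_of_maximal hL hP hmax _ hPk (by omega) (by omega))
    rw [hL.idxOf_getElem] at this
    omega
  · rw [List.getLast?_eq_getElem?, show L.length - 1 = k by omega, List.getElem?_eq_getElem hlt]
    exact Or.inl rfl

end Segments

theorem head?_flatten_of_head? {α : Type*} {L : List (List α)} {B : List α}
    (h : L.head? = some B) (hB : B ≠ []) : L.flatten.head? = B.head? := by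
  obtain ⟨L', rfl⟩ := List.head?_eq_some_iff.1 h
  rw [List.flatten_cons, List.head?_append_of_ne_nil _ hB]

theorem getLast?_flatten_of_getLast? {α : Type*} {L : List (List α)} {B : List α}
    (h : L.getLast? = some B) (hB : B ≠ []) : L.flatten.getLast? = B.getLast? := by
  obtain ⟨L', rfl⟩ := List.getLast?_eq_some_iff.1 h
  rw [List.flatten_append, List.flatten_singleton, List.getLast?_append_of_ne_nil _ hB]

@[simp] theorem children_node (cs : List OTree) : (OTree.node cs).children = cs := rfl

@[simp] theorem subtreeAt?_nil (t : OTree) : subtreeAt? t [] = some t := rfl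

theorem subtreeAt?_cons (t : OTree) (i : ℕ) (p : List ℕ) :
    subtreeAt? t (i :: p) = t.children[i]?.bind (subtreeAt? · p) := by
  simp only [subtreeAt?]
  cases t.children[i]? <;> rfl

theorem subtreeAt?_append (t : OTree) (p q : List ℕ) :
    subtreeAt? t (p ++ q) = (subtreeAt? t p).bind (subtreeAt? · q) := by
  induction p generalizing t with
  | nil => rfl
  | cons i p ih =>
    simp only [List.cons_append, subtreeAt?_cons, ih, Option.bind_assoc]

theorem one_le_height (t : OTree) : 1 ≤ height t := by
  cases t with | node cs => simp [height]

theorem exists_height_eq_heightList {cs : List OTree} (h : cs ≠ []) :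
    ∃ c ∈ cs, height c = heightList cs := by
  induction cs with
  | nil => contradiction
  | cons d ds ih =>
    rcases eq_or_ne ds [] with rfl | hne
    · exact ⟨d, by simp, by simp [heightList]⟩
    obtain ⟨c, hc, hcs⟩ := ih hne
    rcases le_total (height d) (heightList ds) with hle | hle
    · exact ⟨c, List.mem_cons_of_mem _ hc, by simp [heightList, hcs, hle]⟩
    · exact ⟨d, by simp, by simp [heightList, hle]⟩

theorem heightList_eq_of_forall {cs : List OTree} {a : ℕ} (h : cs ≠ [])
    (hall : ∀ c ∈ cs, height c = a) : heightList cs = a := by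
  obtain ⟨c, hc, hcs⟩ := exists_height_eq_heightList h
  rw [← hcs, hall c hc]

theorem children_ne_nil_of_two_le_height {t : OTree} (h : 2 ≤ height t) : t.children ≠ [] := by
  cases t with | node cs =>
  rintro rfl
  simp [height, heightList] at h

theorem exists_isLeaf_length_eq_height (t : OTree) :
    ∃ p, IsLeaf t p ∧ p.length + 1 = height t := by
  induction hh : height t using Nat.strong_induction_on generalizing t with
  | _ h ih =>
  cases t with | node cs =>
  rcases eq_or_ne cs [] with rfl | hne
  · exact ⟨[], rfl, by simpa [height, heightList] using hh⟩
  obtain ⟨c, hc, hcs⟩ := exists_height_eq_heightList hne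
  obtain ⟨i, hi, rfl⟩ := List.getElem_of_mem hc
  obtain ⟨p, hp, hlen⟩ := ih _ (by rw [← hh]; simp only [height, hcs]; omega) cs[i] rfl
  refine ⟨i :: p, ?_, ?_⟩
  · simpa [IsLeaf, subtreeAt?_cons, List.getElem?_eq_getElem hi] using hp
  · simp only [List.length_cons, ← hh, height, ← hcs]; omega

theorem uniform_subtree {t s : OTree} {p : List ℕ} (ht : Uniform t)
    (hs : subtreeAt? t p = some s) : Uniform s ∧ height s + p.length = height t := by
  have leaf_iff : ∀ q, IsLeaf t (p ++ q) ↔ IsLeaf s q := by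
    simp [IsLeaf, subtreeAt?_append, hs]
  obtain ⟨q, hq, hlen⟩ := exists_isLeaf_length_eq_height s
  have := ht _ ((leaf_iff q).2 hq)
  refine ⟨fun q' hq' => ?_, ?_⟩
  · have := ht _ ((leaf_iff q').2 hq')
    simp only [List.length_append] at *
    omega
  · simp only [List.length_append] at this
    omega

theorem uniform_child {t c : OTree} {i : ℕ} (ht : Uniform t) (hc : t.children[i]? = some c) :
    Uniform c ∧ height c + 1 = height t :=
  uniform_subtree (p := [i]) ht (by simp [subtreeAt?_cons, hc])

theorem subtreeAt?_trunc {p : List ℕ} {k : ℕ} (t : OTree) (h : p.length ≤ k) :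
    subtreeAt? (trunc k t) p = (subtreeAt? t p).map (trunc (k - p.length)) := by
  induction p generalizing k t with
  | nil => rfl
  | cons i p ih =>
    obtain ⟨k, rfl⟩ : ∃ k', k = k' + 1 := Nat.exists_eq_add_one.2 (by simp at h; omega)
    simp only [subtreeAt?_cons, trunc, children_node, List.getElem?_map]
    cases t.children[i]? with
    | none => rfl
    | some c => simpa using ih c (by simpa using h)

theorem length_le_of_subtreeAt?_trunc {p : List ℕ} {k : ℕ} {t s : OTree}
    (h : subtreeAt? (trunc k t) p = some s) : p.length ≤ k := by
  induction p generalizing k t with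
  | nil => simp
  | cons i p ih =>
    cases k with
    | zero => simp [trunc, subtreeAt?_cons] at h
    | succ k =>
      simp only [trunc, subtreeAt?_cons, children_node, List.getElem?_map] at h
      cases hc : t.children[i]? with
      | none => simp [hc] at h
      | some c =>
        simp only [hc, Option.map_some, Option.bind_some] at h
        simpa using ih h

theorem length_trunc_children {k : ℕ} (hk : 1 ≤ k) (s : OTree) :
    (trunc k s).children.length = s.children.length := by
  obtain ⟨k, rfl⟩ := Nat.exists_eq_add_one.2 hk
  simp [trunc]

theorem height_trunc {t : OTree} {k : ℕ} (ht : Uniform t) (h : k < height t) :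
    height (trunc k t) = k + 1 := by
  induction k generalizing t with
  | zero => simp [trunc, height, heightList]
  | succ k ih =>
    have hne := children_ne_nil_of_two_le_height (t := t) (by omega)
    have hall : ∀ c ∈ t.children.map (trunc k), height c = k + 1 := by
      simp only [List.mem_map, forall_exists_index, and_imp, forall_apply_eq_imp_iff₂]
      intro c hc
      obtain ⟨i, hi, rfl⟩ := List.getElem_of_mem hc
      obtain ⟨hu, hh⟩ := uniform_child ht (List.getElem?_eq_getElem hi)
      exact ih hu (by omega)
    simp only [trunc, height, heightList_eq_of_forall (by simpa using hne) hall]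
    omega

theorem uniform_trunc {t : OTree} {k : ℕ} (ht : Uniform t) (h : k < height t) :
    Uniform (trunc k t) := by
  intro p hp
  have hlen : p.length ≤ k := length_le_of_subtreeAt?_trunc hp
  rw [height_trunc ht h]
  by_contra hne
  rw [IsLeaf, subtreeAt?_trunc t hlen] at hp
  obtain ⟨s, hs, hsk⟩ := Option.map_eq_some_iff.1 hp
  have hchildren := congrArg (·.children.length) hsk
  simp only [length_trunc_children (by omega : 1 ≤ k - p.length), children_node,
    List.length_nil, List.length_eq_zero_iff] at hchildren
  cases s with | node ds =>
  cases hchildren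
  have := ht p hs
  omega

theorem IsVertex.of_trunc {t : OTree} {k : ℕ} {p : List ℕ} (h : IsVertex (trunc k t) p) :
    IsVertex t p ∧ p.length ≤ k := by
  obtain ⟨s, hs⟩ := Option.isSome_iff_exists.1 h
  have hlen := length_le_of_subtreeAt?_trunc hs
  rw [subtreeAt?_trunc t hlen] at hs
  obtain ⟨s', hs', -⟩ := Option.map_eq_some_iff.1 hs
  exact ⟨by simp [IsVertex, hs'], hlen⟩

structure IsBranchRel (Br : List ℕ → List ℕ → Prop) : Prop where
  isPrefix : ∀ {v w}, Br v w → v <+: w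
  refl : ∀ v, Br v v
  trans : ∀ {u v w}, Br u v → Br v w → Br u w
  of_prefix : ∀ {u v w}, Br u w → u <+: v → v <+: w → Br v w

/-- Whenever the step from `a` to `b` enters the subtree of a vertex `v`, it enters it at a
vertex of the branch `Br v`; read with `flip`, a step leaving the subtree of `v` leaves it from a
vertex of `Br v`. -/
def EntersAlong (Br : List ℕ → List ℕ → Prop) (a b : List ℕ) : Prop :=
  ∀ v, v <+: b → ¬ v <+: a → Br v b

theorem EntersAlong.append_left {Br Br' : List ℕ → List ℕ → Prop} {q a b : List ℕ}
    (hlift : ∀ {v w}, Br' v w → Br (q ++ v) (q ++ w)) (h : EntersAlong Br' a b) :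
    EntersAlong Br (q ++ a) (q ++ b) := by
  intro v hvb hva
  obtain ⟨v', rfl⟩ : q <+: v := by
    rcases List.prefix_or_prefix_of_prefix hvb (List.prefix_append q b) with hvq | hqv
    · exact absurd (hvq.trans (List.prefix_append q a)) hva
    · exact hqv
  rw [List.prefix_append_right_inj] at hvb hva
  exact hlift (h v' hvb hva)

theorem IsBranchRel.entersAlong_singleton {Br : List ℕ → List ℕ → Prop} (hBr : IsBranchRel Br)
    (i j : ℕ) : EntersAlong Br [i] [j] := by
  intro v hvj hvi
  rcases List.prefix_cons_iff.1 hvj with rfl | ⟨v', rfl, hv'⟩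
  · exact absurd List.nil_prefix hvi
  · rw [List.prefix_nil.1 hv']
    exact hBr.refl _

theorem IsBranchRel.isChain_entersAlong_flatten {ι : Type*} {Br : List ℕ → List ℕ → Prop}
    (hBr : IsBranchRel Br) {X : List ι} {pre : ι → List ℕ} {B : ι → List (List ℕ)}
    (hne : ∀ x ∈ X, B x ≠ []) (hB : ∀ x ∈ X, (B x).IsChain (EntersAlong Br))
    (hhead : ∀ x ∈ X, ∀ b ∈ (B x).head?, Br (pre x) b)
    (hlast : ∀ x ∈ X, ∀ a ∈ (B x).getLast?, pre x <+: a)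
    (hX : X.IsChain fun x y => EntersAlong Br (pre x) (pre y)) :
    (X.map B).flatten.IsChain (EntersAlong Br) := by
  rw [List.isChain_flatten (by simpa [eq_comm] using hne), List.isChain_map]
  refine ⟨by simpa using hB, hX.imp_of_mem_imp fun x y hx hy hxy a ha b hb v hvb hva => ?_⟩
  have hyb := hhead y hy b hb
  rcases List.prefix_or_prefix_of_prefix hvb (hBr.isPrefix hyb) with hvy | hyv
  · exact hBr.trans (hxy v hvy fun h => hva (h.trans (hlast x hx a ha))) hyb
  · exact hBr.of_prefix hyb hyv hvb

theorem IsBranchRel.isChain_flip_entersAlong_flatten {ι : Type*} {Br : List ℕ → List ℕ → Prop}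
    (hBr : IsBranchRel Br) {X : List ι} {pre : ι → List ℕ} {B : ι → List (List ℕ)}
    (hne : ∀ x ∈ X, B x ≠ []) (hB : ∀ x ∈ X, (B x).IsChain (flip (EntersAlong Br)))
    (hlast : ∀ x ∈ X, ∀ a ∈ (B x).getLast?, Br (pre x) a)
    (hhead : ∀ x ∈ X, ∀ b ∈ (B x).head?, pre x <+: b)
    (hX : X.IsChain fun x y => EntersAlong Br (pre y) (pre x)) :
    (X.map B).flatten.IsChain (flip (EntersAlong Br)) := by
  have := hBr.isChain_entersAlong_flatten (X := X.reverse) (pre := pre)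
    (B := fun x => (B x).reverse) (by simpa using hne)
    (fun x hx => List.isChain_reverse.2 (hB x (List.mem_reverse.1 hx)))
    (by simpa using hlast) (by simpa using hhead) (List.isChain_reverse.2 hX)
  rw [← List.isChain_reverse, List.reverse_flatten, List.map_map]
  simpa [← List.map_reverse, flip, Function.comp_def] using this

theorem onLeftmostBranch_iff {v w : List ℕ} :
    OnLeftmostBranch v w ↔ ∃ k, w = v ++ List.replicate k 0 := by
  constructor
  · rintro ⟨⟨r, rfl⟩, h⟩
    refine ⟨r.length, congrArg _ (List.eq_replicate_iff.2 ⟨rfl, fun b hb => ?_⟩)⟩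
    obtain ⟨i, hi, rfl⟩ := List.getElem_of_mem hb
    simpa [List.getElem_append_right] using h (v.length + i) (by simp; omega) (by omega)
  · rintro ⟨k, rfl⟩
    refine ⟨List.prefix_append _ _, fun n hn hvn => ?_⟩
    simp [List.getElem_append_right hvn]

theorem isBranchRel_onLeftmostBranch : IsBranchRel OnLeftmostBranch where
  isPrefix h := h.1
  refl v := onLeftmostBranch_iff.2 ⟨0, by simp⟩
  trans h₁ h₂ := by
    obtain ⟨k, rfl⟩ := onLeftmostBranch_iff.1 h₁
    obtain ⟨k', rfl⟩ := onLeftmostBranch_iff.1 h₂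
    exact onLeftmostBranch_iff.2 ⟨k + k', by simp⟩
  of_prefix := by
    intro u v w h huv hvw
    obtain ⟨k, rfl⟩ := onLeftmostBranch_iff.1 h
    obtain ⟨r, rfl⟩ := huv
    obtain ⟨hr, hrep⟩ := List.prefix_replicate_iff.1 ((List.prefix_append_right_inj u).1 hvw)
    generalize r.length = j at hr hrep
    subst hrep
    exact onLeftmostBranch_iff.2 ⟨k - j, by simp [Nat.add_sub_cancel' hr]⟩

theorem OnLeftmostBranch.append_left {v w : List ℕ} (q : List ℕ) (h : OnLeftmostBranch v w) :
    OnLeftmostBranch (q ++ v) (q ++ w) := by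
  obtain ⟨k, rfl⟩ := onLeftmostBranch_iff.1 h
  exact onLeftmostBranch_iff.2 ⟨k, by simp⟩

theorem isBranchRel_onRightmostBranch (t : OTree) : IsBranchRel (OnRightmostBranch t) where
  isPrefix h := h.1
  refl v := ⟨List.prefix_rfl, fun n hn hvn => absurd hn (by omega)⟩
  trans := by
    rintro u v w ⟨huv, h₁⟩ ⟨hvw, h₂⟩
    refine ⟨huv.trans hvw, fun n hn hun s hs => ?_⟩
    by_cases hnv : n < v.length
    · have htake : w.take n = v.take n := by
        rw [List.prefix_iff_eq_take.1 hvw, List.take_take, Nat.min_eq_left hnv.le]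
      simpa [hvw.getElem hnv] using h₁ n hnv hun s (htake ▸ hs)
    · exact h₂ n hn (by omega) s hs
  of_prefix := by
    rintro u v w ⟨-, h⟩ huv hvw
    exact ⟨hvw, fun n hn hvn => h n hn (huv.length_le.trans hvn)⟩

theorem OnRightmostBranch.append_left {t s : OTree} {q v w : List ℕ}
    (hs : subtreeAt? t q = some s) (h : OnRightmostBranch s v w) :
    OnRightmostBranch t (q ++ v) (q ++ w) := by
  refine ⟨(List.prefix_append_right_inj q).2 h.1, fun n hn hqn s' hs' => ?_⟩
  simp only [List.length_append] at hn hqn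
  obtain ⟨n, rfl⟩ : ∃ n', n = q.length + n' := ⟨n - q.length, by omega⟩
  rw [List.take_length_add_append, subtreeAt?_append, hs, Option.bind_some] at hs'
  simpa [List.getElem_append_right] using h.2 n (by omega) (by omega) s' hs'

theorem OnRightmostBranch.of_trunc {t : OTree} {k : ℕ} {v w : List ℕ}
    (h : OnRightmostBranch (trunc k t) v w) (hw : w.length ≤ k) : OnRightmostBranch t v w := by
  refine ⟨h.1, fun n hn hvn s hs => ?_⟩
  have hlen : (w.take n).length = n := by simp; omega
  have := h.2 n hn hvn (trunc (k - n) s) (by rw [subtreeAt?_trunc t (by omega), hs, hlen]; rfl)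
  rwa [length_trunc_children (by omega)] at this

theorem onRightmostBranch_lastChild {t : OTree} (h : t.children ≠ []) :
    OnRightmostBranch t [] [t.children.length - 1] := by
  refine ⟨List.nil_prefix, fun n hn _ s hs => ?_⟩
  obtain rfl : n = 0 := by simpa using hn
  obtain rfl : t = s := by simpa using hs
  have := List.length_pos_iff.2 h
  simp only [List.get_eq_getElem, List.getElem_singleton]
  omega

theorem levelPaths_succ (m : ℕ) (t : OTree) : levelPaths (m + 1) t =
    ((t.children.zipIdx.map Prod.swap).map fun ic => (levelPaths m ic.2).map (ic.1 :: ·)).flatten :=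
  rfl

theorem getElem?_of_mem_zipIdx_swap {α : Type*} {l : List α} {ic : ℕ × α}
    (h : ic ∈ l.zipIdx.map Prod.swap) : l[ic.1]? = some ic.2 := by
  obtain ⟨⟨a, i⟩, hm, rfl⟩ := List.mem_map.1 h
  exact List.mem_zipIdx_iff_getElem?.1 hm

theorem length_and_subtreeAt?_of_mem_levelPaths {m : ℕ} {t : OTree} {q : List ℕ}
    (h : q ∈ levelPaths m t) : q.length = m ∧ ∃ s, subtreeAt? t q = some s := by
  induction m generalizing t q with
  | zero =>
    obtain rfl := List.mem_singleton.1 h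
    exact ⟨rfl, t, rfl⟩
  | succ m ih =>
    obtain ⟨B, hB, hqB⟩ := List.mem_flatten.1 h
    obtain ⟨ic, hic, rfl⟩ := List.mem_map.1 hB
    obtain ⟨r, hr, rfl⟩ := List.mem_map.1 hqB
    obtain ⟨hlen, s, hs⟩ := ih hr
    refine ⟨by simp [hlen], s, ?_⟩
    rw [subtreeAt?_cons, getElem?_of_mem_zipIdx_swap hic, Option.bind_some, hs]

theorem head?_levelPaths {m : ℕ} {t : OTree} (ht : Uniform t) (h : m < height t) :
    (levelPaths m t).head? = some (List.replicate m 0) := by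
  induction m generalizing t with
  | zero => rfl
  | succ m ih =>
    obtain ⟨c, cs, hcs⟩ :=
      List.exists_cons_of_ne_nil (children_ne_nil_of_two_le_height (t := t) (by omega))
    obtain ⟨hu, hh⟩ := uniform_child (i := 0) (c := c) ht (by simp [hcs])
    have := ih hu (by omega)
    simp [levelPaths_succ, hcs, this, List.replicate_succ]

theorem levelPaths_ne_nil {m : ℕ} {t : OTree} (ht : Uniform t) (h : m < height t) :
    levelPaths m t ≠ [] :=
  List.ne_nil_of_mem (List.mem_of_head? (head?_levelPaths ht h))

theorem exists_getLast?_levelPaths {m : ℕ} {t : OTree} (ht : Uniform t) (h : m < height t) :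
    ∃ q, (levelPaths m t).getLast? = some q ∧ OnRightmostBranch t [] q := by
  induction m generalizing t with
  | zero => exact ⟨[], rfl, (isBranchRel_onRightmostBranch t).refl []⟩
  | succ m ih =>
    have hne := children_ne_nil_of_two_le_height (t := t) (by omega)
    obtain ⟨c, hlast⟩ : ∃ c, t.children[t.children.length - 1]? = some c :=
      ⟨_, List.getElem?_eq_getElem (by simpa using List.length_pos_iff.2 hne)⟩
    obtain ⟨hu, hh⟩ := uniform_child ht hlast
    obtain ⟨r, hr, hrR⟩ := ih hu (by omega)
    refine ⟨(t.children.length - 1) :: r, ?_, ?_⟩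
    · rw [levelPaths_succ, getLast?_flatten_of_getLast?
        (B := (levelPaths m c).map ((t.children.length - 1) :: ·))
        (by simp [List.getLast?_eq_getElem?, hlast])
        (by simpa using levelPaths_ne_nil hu (by omega))]
      simp [hr]
    · exact (isBranchRel_onRightmostBranch t).trans (onRightmostBranch_lastChild hne)
        (hrR.append_left (q := [_]) (by simp [subtreeAt?_cons, hlast]))

theorem nodup_levelPaths (m : ℕ) (t : OTree) : (levelPaths m t).Nodup := by
  induction m generalizing t with
  | zero => simp [levelPaths]
  | succ m ih =>
    rw [levelPaths_succ, List.nodup_flatten, List.pairwise_map]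
    refine ⟨fun B hB => ?_, ?_⟩
    · obtain ⟨ic, -, rfl⟩ := List.mem_map.1 hB
      exact (ih ic.2).map List.cons_injective
    · have hidx : (t.children.zipIdx.map Prod.swap).Pairwise fun a b => a.1 ≠ b.1 := by
        have := List.nodup_zipIdx_map_snd (l := t.children)
        rw [List.Nodup, List.pairwise_map] at this
        simpa [List.pairwise_map] using this
      refine hidx.imp fun hne x hx hy => hne ?_
      obtain ⟨r, -, rfl⟩ := List.mem_map.1 hx
      obtain ⟨r', -, heq⟩ := List.mem_map.1 hy
      exact (List.cons_eq_cons.1 heq).1.symm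

theorem isChain_levelPaths_entersAlong_leftmost {m : ℕ} {t : OTree} (ht : Uniform t)
    (h : m < height t) : (levelPaths m t).IsChain (EntersAlong OnLeftmostBranch) := by
  induction m generalizing t with
  | zero => exact List.isChain_singleton _
  | succ m ih =>
    have child : ∀ ic ∈ t.children.zipIdx.map Prod.swap, Uniform ic.2 ∧ m < height ic.2 :=
      fun ic hic => by
        obtain ⟨hu, hh⟩ := uniform_child ht (getElem?_of_mem_zipIdx_swap hic)
        exact ⟨hu, by omega⟩
    refine isBranchRel_onLeftmostBranch.isChain_entersAlong_flatten (pre := fun ic => [ic.1])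
      (fun ic hic => ?_) (fun ic hic => ?_) (fun ic hic => ?_) (fun ic hic => ?_)
      (List.Pairwise.isChain (List.pairwise_of_forall fun _ _ =>
        isBranchRel_onLeftmostBranch.entersAlong_singleton _ _))
    · simpa using levelPaths_ne_nil (child ic hic).1 (child ic hic).2
    · exact (List.isChain_map _).2 ((ih (child ic hic).1 (child ic hic).2).imp
        fun a b hab => hab.append_left (q := [ic.1]) (OnLeftmostBranch.append_left _))
    · simp only [List.head?_map, head?_levelPaths (child ic hic).1 (child ic hic).2,
        Option.map_some, Option.mem_def, Option.some.injEq, forall_eq']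
      exact onLeftmostBranch_iff.2 ⟨m, rfl⟩
    · simp only [List.getLast?_map, Option.mem_def, Option.map_eq_some_iff]
      rintro _ ⟨r, -, rfl⟩
      exact List.prefix_append [ic.1] r

theorem isChain_levelPaths_flip_entersAlong_rightmost {m : ℕ} {t : OTree} (ht : Uniform t)
    (h : m < height t) : (levelPaths m t).IsChain (flip (EntersAlong (OnRightmostBranch t))) := by
  induction m generalizing t with
  | zero => exact List.isChain_singleton _
  | succ m ih =>
    have child : ∀ ic ∈ t.children.zipIdx.map Prod.swap, Uniform ic.2 ∧ m < height ic.2 :=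
      fun ic hic => by
        obtain ⟨hu, hh⟩ := uniform_child ht (getElem?_of_mem_zipIdx_swap hic)
        exact ⟨hu, by omega⟩
    have hsub : ∀ ic ∈ t.children.zipIdx.map Prod.swap, subtreeAt? t [ic.1] = some ic.2 :=
      fun ic hic => by simp [subtreeAt?_cons, getElem?_of_mem_zipIdx_swap hic]
    refine (isBranchRel_onRightmostBranch t).isChain_flip_entersAlong_flatten
      (pre := fun ic => [ic.1])
      (fun ic hic => ?_) (fun ic hic => ?_) (fun ic hic => ?_) (fun ic hic => ?_)
      (List.Pairwise.isChain (List.pairwise_of_forall fun _ _ =>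
        (isBranchRel_onRightmostBranch t).entersAlong_singleton _ _))
    · simpa using levelPaths_ne_nil (child ic hic).1 (child ic hic).2
    · exact (List.isChain_map _).2 ((ih (child ic hic).1 (child ic hic).2).imp
        fun a b hab => EntersAlong.append_left (q := [ic.1]) (·.append_left (hsub ic hic)) hab)
    · obtain ⟨r, hr, hrR⟩ := exists_getLast?_levelPaths (child ic hic).1 (child ic hic).2
      simp only [List.getLast?_map, hr, Option.map_some, Option.mem_def, Option.some.injEq,
        forall_eq']
      exact hrR.append_left (q := [ic.1]) (hsub ic hic)
    · simp only [List.head?_map, Option.mem_def, Option.map_eq_some_iff]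
      rintro _ ⟨r, -, rfl⟩
      exact List.prefix_append [ic.1] r

theorem one_le_cutLevel (ε : ℝ) (h : ℕ) : 1 ≤ cutLevel ε h := le_max_right _ _

theorem cutLevel_lt {ε : ℝ} (hε1 : ε ≤ 1 / 2) {h : ℕ} (hh : 2 ≤ h) : cutLevel ε h < h := by
  refine max_lt ((Nat.floor_lt' (by omega)).2 ?_) (by omega)
  have : (2 : ℝ) ≤ h := by exact_mod_cast hh
  nlinarith

theorem vEBAux_congr_fuel {ε : ℝ} (hε1 : ε ≤ 1 / 2) {f₁ f₂ : ℕ} {t : OTree} (ht : Uniform t)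
    (h₁ : height t ≤ f₁) (h₂ : height t ≤ f₂) : vEBAux ε f₁ t = vEBAux ε f₂ t := by
  induction f₁ generalizing f₂ t with
  | zero => have := one_le_height t; omega
  | succ f₁ ih =>
    obtain ⟨f₂, rfl⟩ := Nat.exists_eq_add_one.2 (lt_of_lt_of_le (one_le_height t) h₂)
    rw [vEBAux, vEBAux]
    split_ifs with h1
    · rfl
    dsimp only
    have hm := cutLevel_lt hε1 (h := height t) (by omega)
    have hm1 := one_le_cutLevel ε (height t)
    have htop := height_trunc ht (k := cutLevel ε (height t) - 1) (by omega)
    congr 1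
    · exact ih (uniform_trunc ht (by omega)) (by omega) (by omega)
    · congr 1
      refine List.map_congr_left fun q hq => ?_
      obtain ⟨hlen, s, hs⟩ := length_and_subtreeAt?_of_mem_levelPaths hq
      obtain ⟨hsu, hsh⟩ := uniform_subtree ht hs
      simp only [hs, ih hsu (f₂ := f₂) (by omega) (by omega)]

theorem vEB_of_height_le_one (ε : ℝ) {t : OTree} (h : height t ≤ 1) : vEB ε t = [[]] := by
  have : height t = 1 := le_antisymm h (one_le_height t)
  rw [vEB, this, vEBAux, if_pos h]

noncomputable def bottomPart (ε : ℝ) (t : OTree) (q : List ℕ) : List (List ℕ) :=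
  match subtreeAt? t q with
  | some s => (vEB ε s).map (q ++ ·)
  | none => []

theorem bottomPart_eq {ε : ℝ} {t s : OTree} {q : List ℕ} (h : subtreeAt? t q = some s) :
    bottomPart ε t q = (vEB ε s).map (q ++ ·) := by
  simp [bottomPart, h]

theorem prefix_of_mem_bottomPart {ε : ℝ} {t : OTree} {q x : List ℕ} (h : x ∈ bottomPart ε t q) :
    q <+: x := by
  unfold bottomPart at h
  split at h
  · obtain ⟨y, -, rfl⟩ := List.mem_map.1 h
    exact List.prefix_append q y
  · cases h

theorem vEB_eq_append {ε : ℝ} (hε1 : ε ≤ 1 / 2) {t : OTree} (ht : Uniform t) (h : 2 ≤ height t) :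
    vEB ε t = vEB ε (trunc (cutLevel ε (height t) - 1) t) ++
      ((levelPaths (cutLevel ε (height t)) t).map (bottomPart ε t)).flatten := by
  obtain ⟨f, hf⟩ : ∃ f, height t = f + 1 := ⟨height t - 1, by omega⟩
  have hm := cutLevel_lt hε1 h
  have hm1 := one_le_cutLevel ε (height t)
  have htop := height_trunc ht (k := cutLevel ε (height t) - 1) (by omega)
  have hunfold : vEB ε t = vEBAux ε (f + 1) t := by rw [vEB, hf]
  rw [hunfold, vEBAux, if_neg (by omega)]
  dsimp only
  congr 1
  · exact vEBAux_congr_fuel hε1 (uniform_trunc ht (by omega)) (by omega) le_rfl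
  · congr 1
    refine List.map_congr_left fun q hq => ?_
    obtain ⟨hlen, s, hs⟩ := length_and_subtreeAt?_of_mem_levelPaths hq
    obtain ⟨hsu, hsh⟩ := uniform_subtree ht hs
    simp only [hs, bottomPart_eq hs,
      vEBAux_congr_fuel hε1 hsu (f₁ := f) (f₂ := height s) (by omega) le_rfl]
    rfl

@[elab_as_elim]
theorem Uniform.induction_vEB {ε : ℝ} (hε1 : ε ≤ 1 / 2) {motive : OTree → Prop}
    (leaf : ∀ t, height t ≤ 1 → motive t)
    (split : ∀ t, Uniform t → 2 ≤ height t → motive (trunc (cutLevel ε (height t) - 1) t) →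
      (∀ q ∈ levelPaths (cutLevel ε (height t)) t, ∀ s, subtreeAt? t q = some s → motive s) →
      motive t)
    (t : OTree) (ht : Uniform t) : motive t := by
  induction hh : height t using Nat.strong_induction_on generalizing t with
  | _ h ih =>
  subst hh
  by_cases h1 : height t ≤ 1
  · exact leaf t h1
  have hm := cutLevel_lt hε1 (h := height t) (by omega)
  have hm1 := one_le_cutLevel ε (height t)
  refine split t ht (by omega) (ih _ ?_ _ (uniform_trunc ht (by omega)) rfl) fun q hq s hs => ?_
  · rw [height_trunc ht (by omega)]
    omega
  · obtain ⟨hlen, -⟩ := length_and_subtreeAt?_of_mem_levelPaths hq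
    obtain ⟨hsu, hsh⟩ := uniform_subtree ht hs
    exact ih _ (by omega) _ hsu rfl

section vEB

variable {ε : ℝ} (hε1 : ε ≤ 1 / 2)
include hε1

theorem isVertex_of_mem_vEB {t : OTree} (ht : Uniform t) :
    ∀ p ∈ vEB ε t, IsVertex t p := by
  refine Uniform.induction_vEB hε1 (fun t h p hp => ?_) (fun t ht h2 ihtop ihbot p hp => ?_) t ht
  · rw [vEB_of_height_le_one ε h, List.mem_singleton] at hp
    subst hp
    rfl
  · rw [vEB_eq_append hε1 ht h2, List.mem_append, List.mem_flatten] at hp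
    rcases hp with hp | ⟨B, hB, hpB⟩
    · exact (ihtop p hp).of_trunc.1
    · obtain ⟨q, hq, rfl⟩ := List.mem_map.1 hB
      obtain ⟨-, s, hs⟩ := length_and_subtreeAt?_of_mem_levelPaths hq
      rw [bottomPart_eq hs] at hpB
      obtain ⟨p', hp', rfl⟩ := List.mem_map.1 hpB
      simpa [IsVertex, subtreeAt?_append, hs] using ihbot q hq s hs p' hp'

theorem head?_vEB {t : OTree} (ht : Uniform t) : (vEB ε t).head? = some [] := by
  refine Uniform.induction_vEB hε1 (fun t h => ?_) (fun t ht h2 ihtop _ => ?_) t ht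
  · rw [vEB_of_height_le_one ε h]
    rfl
  · rw [vEB_eq_append hε1 ht h2, List.head?_append, ihtop]
    rfl

theorem head?_bottomPart {t s : OTree} {q : List ℕ} (ht : Uniform t)
    (hs : subtreeAt? t q = some s) : (bottomPart ε t q).head? = some q := by
  simp [bottomPart_eq hs, head?_vEB hε1 (uniform_subtree ht hs).1]

theorem bottomPart_ne_nil {t s : OTree} {q : List ℕ} (ht : Uniform t)
    (hs : subtreeAt? t q = some s) : bottomPart ε t q ≠ [] :=
  List.ne_nil_of_mem (List.mem_of_head? (head?_bottomPart hε1 ht hs))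

theorem exists_getLast?_vEB {t : OTree} (ht : Uniform t) :
    ∃ w, (vEB ε t).getLast? = some w ∧ OnRightmostBranch t [] w := by
  refine Uniform.induction_vEB hε1 (fun t h => ?_) (fun t ht h2 _ ihbot => ?_) t ht
  · exact ⟨[], by rw [vEB_of_height_le_one ε h]; rfl, (isBranchRel_onRightmostBranch t).refl []⟩
  obtain ⟨q, hq, hqR⟩ := exists_getLast?_levelPaths ht (cutLevel_lt hε1 h2)
  have hqmem := List.mem_of_getLast? hq
  obtain ⟨-, s, hs⟩ := length_and_subtreeAt?_of_mem_levelPaths hqmem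
  obtain ⟨r, hr, hrR⟩ := ihbot q hqmem s hs
  refine ⟨q ++ r, ?_, (isBranchRel_onRightmostBranch t).trans hqR
    (by simpa using hrR.append_left hs)⟩
  rw [vEB_eq_append hε1 ht h2, List.getLast?_append,
    getLast?_flatten_of_getLast? (B := bottomPart ε t q) (by simp [hq])
      (bottomPart_ne_nil hε1 ht hs)]
  simp [bottomPart_eq hs, hr]

theorem nodup_vEB {t : OTree} (ht : Uniform t) : (vEB ε t).Nodup := by
  refine Uniform.induction_vEB hε1 (fun t h => ?_) (fun t ht h2 ihtop ihbot => ?_) t ht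
  · simp [vEB_of_height_le_one ε h]
  have hm := cutLevel_lt hε1 h2
  have hm1 := one_le_cutLevel ε (height t)
  rw [vEB_eq_append hε1 ht h2, List.nodup_append, List.nodup_flatten, List.pairwise_map]
  refine ⟨ihtop, ⟨fun B hB => ?_, ?_⟩, ?_⟩
  · obtain ⟨q, hq, rfl⟩ := List.mem_map.1 hB
    obtain ⟨-, s, hs⟩ := length_and_subtreeAt?_of_mem_levelPaths hq
    rw [bottomPart_eq hs]
    exact (ihbot q hq s hs).map fun _ _ => List.append_cancel_left
  · refine (nodup_levelPaths _ t).imp_of_mem fun hq hq' hne x hx hx' => hne ?_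
    have hlen := (length_and_subtreeAt?_of_mem_levelPaths hq).1
    have hlen' := (length_and_subtreeAt?_of_mem_levelPaths hq').1
    exact (List.prefix_of_prefix_length_le (prefix_of_mem_bottomPart hx)
      (prefix_of_mem_bottomPart hx') (by omega)).eq_of_length (by omega)
  · rintro p hp _ hp' rfl
    have htop := ((isVertex_of_mem_vEB hε1 (uniform_trunc ht (by omega)) p hp).of_trunc).2
    obtain ⟨B, hB, hpB⟩ := List.mem_flatten.1 hp'
    obtain ⟨q, hq, rfl⟩ := List.mem_map.1 hB
    have hlen := (length_and_subtreeAt?_of_mem_levelPaths hq).1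
    have := (prefix_of_mem_bottomPart hpB).length_le
    omega

theorem isChain_vEB_entersAlong_leftmost {t : OTree} (ht : Uniform t) :
    (vEB ε t).IsChain (EntersAlong OnLeftmostBranch) := by
  refine Uniform.induction_vEB hε1 (fun t h => ?_) (fun t ht h2 ihtop ihbot => ?_) t ht
  · rw [vEB_of_height_le_one ε h]
    exact List.isChain_singleton _
  have hm := cutLevel_lt hε1 h2
  have hsub q (hq : q ∈ levelPaths (cutLevel ε (height t)) t) : ∃ s, subtreeAt? t q = some s :=
    (length_and_subtreeAt?_of_mem_levelPaths hq).2
  rw [vEB_eq_append hε1 ht h2]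
  refine ihtop.append (isBranchRel_onLeftmostBranch.isChain_entersAlong_flatten (pre := id)
    (fun q hq => ?_) (fun q hq => ?_) (fun q hq => ?_)
    (fun q _ a ha => prefix_of_mem_bottomPart (List.mem_of_getLast? ha))
    (isChain_levelPaths_entersAlong_leftmost ht hm)) ?_
  · obtain ⟨s, hs⟩ := hsub q hq
    exact bottomPart_ne_nil hε1 ht hs
  · obtain ⟨s, hs⟩ := hsub q hq
    rw [bottomPart_eq hs]
    exact (List.isChain_map _).2 ((ihbot q hq s hs).imp
      fun a b hab => hab.append_left (OnLeftmostBranch.append_left q))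
  · obtain ⟨s, hs⟩ := hsub q hq
    rw [head?_bottomPart hε1 ht hs]
    rintro b ⟨⟩
    exact isBranchRel_onLeftmostBranch.refl q
  · have hq₀ := head?_levelPaths ht hm
    obtain ⟨s, hs⟩ := hsub _ (List.mem_of_head? hq₀)
    rw [head?_flatten_of_head? (B := bottomPart ε t (List.replicate _ 0)) (by simp [hq₀])
      (bottomPart_ne_nil hε1 ht hs), head?_bottomPart hε1 ht hs]
    rintro a - b ⟨⟩ v hv -
    exact isBranchRel_onLeftmostBranch.of_prefix (onLeftmostBranch_iff.2 ⟨_, rfl⟩)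
      List.nil_prefix hv

theorem isChain_vEB_flip_entersAlong_rightmost {t : OTree} (ht : Uniform t) :
    (vEB ε t).IsChain (flip (EntersAlong (OnRightmostBranch t))) := by
  refine Uniform.induction_vEB hε1 (fun t h => ?_) (fun t ht h2 ihtop ihbot => ?_) t ht
  · rw [vEB_of_height_le_one ε h]
    exact List.isChain_singleton _
  have hm := cutLevel_lt hε1 h2
  have hm1 := one_le_cutLevel ε (height t)
  have htop := uniform_trunc ht (k := cutLevel ε (height t) - 1) (by omega)
  have hshort a (ha : a ∈ vEB ε (trunc (cutLevel ε (height t) - 1) t)) :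
      a.length ≤ cutLevel ε (height t) - 1 :=
    (isVertex_of_mem_vEB hε1 htop a ha).of_trunc.2
  have hsub q (hq : q ∈ levelPaths (cutLevel ε (height t)) t) : ∃ s, subtreeAt? t q = some s :=
    (length_and_subtreeAt?_of_mem_levelPaths hq).2
  rw [vEB_eq_append hε1 ht h2]
  refine List.IsChain.append ?_
    ((isBranchRel_onRightmostBranch t).isChain_flip_entersAlong_flatten (pre := id)
      (fun q hq => ?_) (fun q hq => ?_) (fun q hq => ?_)
      (fun q _ b hb => prefix_of_mem_bottomPart (List.mem_of_head? hb))
      (isChain_levelPaths_flip_entersAlong_rightmost ht hm)) ?_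
  · exact ihtop.imp_of_mem_imp fun a b ha _ hab v hva hvb => (hab v hva hvb).of_trunc (hshort a ha)
  · obtain ⟨s, hs⟩ := hsub q hq
    exact bottomPart_ne_nil hε1 ht hs
  · obtain ⟨s, hs⟩ := hsub q hq
    rw [bottomPart_eq hs]
    exact (List.isChain_map _).2 ((ihbot q hq s hs).imp
      fun a b hab => EntersAlong.append_left (fun h => h.append_left hs) hab)
  · obtain ⟨s, hs⟩ := hsub q hq
    obtain ⟨r, hr, hrR⟩ := exists_getLast?_vEB hε1 (uniform_subtree ht hs).1
    simp only [bottomPart_eq hs, List.getLast?_map, hr, Option.map_some, Option.mem_def,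
      Option.some.injEq, forall_eq']
    simpa using hrR.append_left hs
  · obtain ⟨w, hw, hwR⟩ := exists_getLast?_vEB hε1 htop
    rw [hw]
    rintro _ ⟨⟩ b - v hv -
    exact (isBranchRel_onRightmostBranch t).of_prefix
      (hwR.of_trunc (hshort _ (List.mem_of_getLast? hw))) List.nil_prefix hv

end vEB

/-- Write the subtree `S` of all descendants of a vertex `v` as the
disjoint union of its maximal memory intervals. For each such maximal memory interval
`I`, its first vertex in `vEB_ε(T)` lies on the leftmost branch of `S` and its last
vertex lies on the rightmost branch of `S`. -/
theorem maximal_interval_endpoints_on_extreme_branches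
    (ε : ℝ) (hε0 : 0 < ε) (hε1 : ε ≤ 1/2) (t : OTree) (ht : Uniform t)
    (v : List ℕ) (hv : IsVertex t v)
    (I : Set (List ℕ)) (hI : MemInterval ε t I) (hIne : I.Nonempty)
    (hIS : I ⊆ {w | IsVertex t w ∧ v <+: w})
    (hImax : ∀ J, MemInterval ε t J → I ⊆ J →
      J ⊆ {w | IsVertex t w ∧ v <+: w} → J = I) :
    (∀ w ∈ I, (∀ u ∈ I, pos ε t w ≤ pos ε t u) → OnLeftmostBranch v w) ∧
    (∀ w ∈ I, (∀ u ∈ I, pos ε t u ≤ pos ε t w) → OnRightmostBranch t v w) := by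
  obtain ⟨i, n, rfl⟩ := hI
  have hnd := nodup_vEB hε1 ht
  have hvert (k : ℕ) (hk : k < (vEB ε t).length) : IsVertex t (vEB ε t)[k] :=
    isVertex_of_mem_vEB hε1 ht _ (List.getElem_mem hk)
  refine ⟨fun w hw hfirst => ?_, fun w hw hlast => ?_⟩
  · rcases eq_head_or_not_pred_of_maximal hnd hIS hImax hw hfirst with hhead | ⟨k, hk, rfl, hout⟩
    · obtain rfl : w = [] := Option.some.inj (hhead.symm.trans (head?_vEB hε1 ht))
      obtain rfl := List.prefix_nil.1 (hIS hw).2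
      exact isBranchRel_onLeftmostBranch.refl []
    · exact (isChain_vEB_entersAlong_leftmost hε1 ht).getElem k hk v (hIS hw).2
        fun hv => hout ⟨hvert k (by omega), hv⟩
  · rcases eq_getLast_or_not_succ_of_maximal hnd hIS hImax hw hlast with hend | ⟨k, hk, rfl, hout⟩
    · obtain ⟨w', hw', hR⟩ := exists_getLast?_vEB hε1 ht
      obtain rfl : w = w' := Option.some.inj (hend.symm.trans hw')
      exact (isBranchRel_onRightmostBranch t).of_prefix hR List.nil_prefix (hIS hw).2
    · exact (isChain_vEB_flip_entersAlong_rightmost hε1 ht).getElem k hk v (hIS hw).2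
        fun hv => hout ⟨hvert (k + 1) hk, hv⟩

end VEB
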